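/- Let ψ = Q_n x_n Q_(n−1) x_(n−1) ⋯ Q_1 x_1 φ(x_n,…,x_1) be a fully quantified Boolean formula in prenex normal form over Var={x_n,…,x_1} (Q_i ∈ {∃,∀}, φ quantifier-free), and let ξ = start → ξ_n be the AB̄ formula defined by: ξ_0 = φ(x_n,…,x_1); ξ_i = ⟨B̄⟩((⟨A⟩ x_{i aux}) ∧ ξ_(i−1)) if Q_i = ∃, and ξ_i = [B̄]((⟨A⟩ x_{i aux}) → ξ_(i−1)) if Q_i = ∀. Then ψ is true if and only if K_QBF^Var ⊨ ξ, i.e., every initial track of K_QBF^Var satisfies ξ. -/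

import Mathlib

open Classical

universe u v

structure KripkeStructure (AP : Type u) (W : Type v) where
  delta : W → W → Prop
  leftTotal : ∀ w, ∃ w', delta w w'
  mu : W → Set AP
  init : W

variable {AP : Type u} {W : Type v}

/-- A track over a Kripke structure: a finite sequence of at least two states
respecting the transition relation. -/
def IsTrack (K : KripkeStructure AP W) (ρ : List W) : Prop :=
  2 ≤ ρ.length ∧ ρ.Chain' K.delta

/-- `σ` is a proper prefix (of length at least 2) of `ρ`, i.e. `σ ∈ Pref(ρ)`. -/
def ProperPrefix (σ ρ : List W) : Prop :=
  σ <+: ρ ∧ σ ≠ ρ ∧ 2 ≤ σ.length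

/-- `σ` is a proper suffix (of length at least 2) of `ρ`, i.e. `σ ∈ Suff(ρ)`. -/
def ProperSuffix (σ ρ : List W) : Prop :=
  σ <:+ ρ ∧ σ ≠ ρ ∧ 2 ≤ σ.length

/-- Formulas of the HS fragment AĀBB̄Ē. -/
inductive HSFormula (AP : Type u) : Type u where
  | prop (p : AP)
  | neg (φ : HSFormula AP)
  | and (φ ψ : HSFormula AP)
  | modA (φ : HSFormula AP)
  | modAbar (φ : HSFormula AP)
  | modB (φ : HSFormula AP)
  | modBbar (φ : HSFormula AP)
  | modEbar (φ : HSFormula AP)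

/-- Satisfaction of an HS formula by a track, under the homogeneity assumption. -/
def sat (K : KripkeStructure AP W) : HSFormula AP → List W → Prop
  | .prop p, ρ => ∀ w ∈ ρ, p ∈ K.mu w
  | .neg φ, ρ => ¬ sat K φ ρ
  | .and φ ψ, ρ => sat K φ ρ ∧ sat K ψ ρ
  | .modA φ, ρ => ∃ σ, IsTrack K σ ∧ σ.head? = ρ.getLast? ∧ sat K φ σ
  | .modAbar φ, ρ => ∃ σ, IsTrack K σ ∧ σ.getLast? = ρ.head? ∧ sat K φ σ
  | .modB φ, ρ => ∃ σ, ProperPrefix σ ρ ∧ sat K φ σ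
  | .modBbar φ, ρ => ∃ σ, IsTrack K σ ∧ ProperPrefix ρ σ ∧ sat K φ σ
  | .modEbar φ, ρ => ∃ σ, IsTrack K σ ∧ ProperSuffix ρ σ ∧ sat K φ σ

/-- The B-nesting depth of an AĀBB̄Ē formula. -/
def nestB : HSFormula AP → ℕ
  | .prop _ => 0
  | .neg φ => nestB φ
  | .and φ ψ => max (nestB φ) (nestB ψ)
  | .modA φ => nestB φ
  | .modAbar φ => nestB φ
  | .modB φ => 1 + nestB φ
  | .modBbar φ => nestB φ
  | .modEbar φ => nestB φ

/-- Quantifier-free Boolean formulas. -/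
inductive BForm (V : Type u) : Type u where
  | var (x : V)
  | neg (φ : BForm V)
  | and (φ ψ : BForm V)
  | or (φ ψ : BForm V)

/-- Evaluation of a Boolean formula under a truth assignment. -/
def BForm.eval {V : Type u} (α : V → Bool) : BForm V → Bool
  | .var x => α x
  | .neg φ => !(φ.eval α)
  | .and φ ψ => φ.eval α && ψ.eval α
  | .or φ ψ => φ.eval α || ψ.eval α

/-- The variables occurring in a Boolean formula. -/
def BForm.vars {V : Type u} : BForm V → Set V
  | .var x => {x}
  | .neg φ => φ.vars
  | .and φ ψ => φ.vars ∪ ψ.vars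
  | .or φ ψ => φ.vars ∪ ψ.vars

/-- Truth of the prenex quantified Boolean formula
`Q_i x_i Q_(i-1) x_(i-1) ⋯ Q_1 x_1 φ` under assignment `α` (`Q j = true` means
that `x_j` is existentially quantified). -/
def qbfTrue (Q : ℕ → Bool) (φ : BForm ℕ) : ℕ → (ℕ → Bool) → Prop
  | 0, α => φ.eval α = true
  | i + 1, α =>
      if Q (i + 1) = true then ∃ b, qbfTrue Q φ i (Function.update α (i + 1) b)
      else ∀ b, qbfTrue Q φ i (Function.update α (i + 1) b)

/-- Proposition letters of `K_QBF`: the variables, `start` and the auxiliary letters. -/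
inductive QProp : Type where
  | var (i : ℕ)
  | start
  | aux (i : ℕ)

/-- States of `K_QBF` for `n` variables: `v i b second` is `w_(x_(i+1))^(b, 1 or 2)`. -/
inductive QState (n : ℕ) : Type where
  | w0
  | w1
  | sink
  | v (i : Fin n) (b : Bool) (second : Bool)

/-- The transition relation of `K_QBF`. -/
def qDelta (n : ℕ) : QState n → QState n → Prop
  | .w0, .w1 => True
  | .w1, .sink => n = 0
  | .w1, .v i _ sec => i.1 = n - 1 ∧ sec = false
  | .v i b false, .v i' b' sec' => i' = i ∧ b' = b ∧ sec' = true
  | .v i _ true, .v i' _ sec' => 1 ≤ i.1 ∧ i'.1 = i.1 - 1 ∧ sec' = false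
  | .v i _ true, .sink => i.1 = 0
  | .sink, .sink => True
  | _, _ => False

theorem qDelta_leftTotal (n : ℕ) : ∀ s, ∃ t, qDelta n s t := by
  intro s
  match s with
  | .w0 => exact ⟨.w1, trivial⟩
  | .w1 =>
    cases n with
    | zero => exact ⟨.sink, rfl⟩
    | succ m =>
        refine ⟨.v ⟨m, Nat.lt_succ_self m⟩ true false, ?_, rfl⟩
        simp
  | .sink => exact ⟨.sink, trivial⟩
  | .v i b false => exact ⟨.v i b true, rfl, rfl, rfl⟩
  | .v i b true =>
    by_cases h : i.1 = 0
    · exact ⟨.sink, h⟩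
    · exact ⟨.v ⟨i.1 - 1, by omega⟩ true false, by omega, rfl, rfl⟩

/-- The labelling of `K_QBF` (variables are `1, …, n`). -/
def qMu (n : ℕ) : QState n → Set QProp
  | .w0 => {p | (∃ j, 1 ≤ j ∧ j ≤ n ∧ p = .var j) ∨ p = .start}
  | .w1 => {p | (∃ j, 1 ≤ j ∧ j ≤ n ∧ p = .var j) ∨ p = .start}
  | .sink => {p | ∃ j, 1 ≤ j ∧ j ≤ n ∧ p = .var j}
  | .v i true _ => {p | (∃ j, 1 ≤ j ∧ j ≤ n ∧ p = .var j) ∨ p = .aux (i.1 + 1)}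
  | .v i false _ => {p | (∃ j, 1 ≤ j ∧ j ≤ n ∧ j ≠ i.1 + 1 ∧ p = .var j) ∨ p = .aux (i.1 + 1)}

/-- The Kripke structure `K_QBF^Var` for variables `x_1, …, x_n`. -/
def KQBF (n : ℕ) : KripkeStructure QProp (QState n) where
  delta := qDelta n
  leftTotal := qDelta_leftTotal n
  mu := qMu n
  init := .w0

/-- A quantifier-free Boolean formula read as an HS formula over `QProp`. -/
def BForm.toHSQ : BForm ℕ → HSFormula QProp
  | .var x => .prop (.var x)
  | .neg φ => .neg φ.toHSQ
  | .and φ ψ => .and φ.toHSQ ψ.toHSQ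
  | .or φ ψ => .neg (.and (.neg φ.toHSQ) (.neg ψ.toHSQ))

/-- The formula `ξ_i`: `ξ_0 = φ`; `ξ_i = ⟨B̄⟩((⟨A⟩ x_{i aux}) ∧ ξ_(i-1))` if
`Q_i = ∃`, and `ξ_i = [B̄]((⟨A⟩ x_{i aux}) → ξ_(i-1))` if `Q_i = ∀`. -/
def xiF (Q : ℕ → Bool) (φ : BForm ℕ) : ℕ → HSFormula QProp
  | 0 => φ.toHSQ
  | i + 1 =>
      if Q (i + 1) = true then
        .modBbar (.and (.modA (.prop (.aux (i + 1)))) (xiF Q φ i))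
      else
        .neg (.modBbar (.and (.modA (.prop (.aux (i + 1)))) (.neg (xiF Q φ i))))

/-!
`K_QBF` is a single line `w0 w1` followed, for `x_n` down to `x_1`, by a choice between the
two copies `w^⊤1 w^⊤2` and `w^⊥1 w^⊥2` of the states of `x_j`, and ends in the sink. The only
initial track satisfying `start` is `w0 w1`. By homogeneity a track satisfies `x_j` iff it
avoids the `⊥`-states of `x_j`, so a track that has passed the choices for `x_n, …, x_(i+1)`
carries an assignment. The formula `⟨A⟩ x_{i aux}` holds exactly on tracks ending in a first
copy of a state of `x_i`; hence the `B̄`-extensions of such a track satisfying it are the two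
tracks that choose a value for `x_i`, and `⟨B̄⟩` / `[B̄]` in `ξ_i` become `∃` / `∀` over `x_i`.
Induction on `i` gives `ξ_i ↔ Q_i x_i ⋯ Q_1 x_1 φ` on these tracks.
-/

theorem List.isChain_append_iff_of_getLast? {α : Type*} {R : α → α → Prop} {ρ τ : List α}
    {u : α} (hu : ρ.getLast? = some u) :
    List.IsChain R (ρ ++ τ) ↔ List.IsChain R ρ ∧ List.IsChain R (u :: τ) := by
  simp [List.isChain_append, List.isChain_cons, hu, and_comm]

theorem isTrack_iff {K : KripkeStructure AP W} {ρ : List W} :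
    IsTrack K ρ ↔ 2 ≤ ρ.length ∧ List.IsChain K.delta ρ :=
  Iff.rfl

theorem ProperPrefix.exists_append {σ ρ : List W} (h : ProperPrefix ρ σ) :
    ∃ τ, τ ≠ [] ∧ σ = ρ ++ τ := by
  obtain ⟨⟨τ, rfl⟩, hne, _⟩ := h
  exact ⟨τ, by rintro rfl; simp at hne, rfl⟩

theorem properPrefix_append {ρ τ : List W} (hρ : 2 ≤ ρ.length) (hτ : τ ≠ []) :
    ProperPrefix ρ (ρ ++ τ) :=
  ⟨List.prefix_append _ _, by simpa using hτ, hρ⟩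

section Semantics

variable (K : KripkeStructure QProp W)

theorem sat_prop_append {p : QProp} {ρ σ : List W} :
    sat K (.prop p) (ρ ++ σ) ↔ sat K (.prop p) ρ ∧ sat K (.prop p) σ := by
  simp only [sat, List.mem_append, or_imp, forall_and]

noncomputable def trackAssignment (ρ : List W) (j : ℕ) : Bool :=
  decide (sat K (.prop (.var j)) ρ)

theorem trackAssignment_eq_true {ρ : List W} {j : ℕ} :
    trackAssignment K ρ j = true ↔ sat K (.prop (.var j)) ρ :=
  decide_eq_true_iff

theorem sat_toHSQ_iff (ψ : BForm ℕ) (ρ : List W) :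
    sat K ψ.toHSQ ρ ↔ ψ.eval (trackAssignment K ρ) = true := by
  induction ψ with
  | var x => simp [BForm.toHSQ, BForm.eval, trackAssignment]
  | neg ψ ih => simp [BForm.toHSQ, BForm.eval, sat, ih]
  | and ψ₁ ψ₂ ih₁ ih₂ => simp [BForm.toHSQ, BForm.eval, sat, ih₁, ih₂]
  | or ψ₁ ψ₂ ih₁ ih₂ =>
    simp only [BForm.toHSQ, BForm.eval, sat, ih₁, ih₂, Bool.or_eq_true]
    tauto

theorem sat_xiF_succ_iff {Q : ℕ → Bool} {φ : BForm ℕ} {i : ℕ} {ρ : List W} {α : ℕ → Bool}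
    (T : Bool → List W)
    (hT : ∀ σ, (IsTrack K σ ∧ ProperPrefix ρ σ ∧ sat K (.modA (.prop (.aux (i + 1)))) σ) ↔
      ∃ b, σ = T b)
    (hsat : ∀ b, sat K (xiF Q φ i) (T b) ↔ qbfTrue Q φ i (Function.update α (i + 1) b)) :
    sat K (xiF Q φ (i + 1)) ρ ↔ qbfTrue Q φ (i + 1) α := by
  have key : ∀ P : List W → Prop,
      (∃ σ, IsTrack K σ ∧ ProperPrefix ρ σ ∧ sat K (.modA (.prop (.aux (i + 1)))) σ ∧ P σ) ↔
        ∃ b, P (T b) := by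
    intro P
    constructor
    · rintro ⟨σ, h₁, h₂, h₃, hP⟩
      obtain ⟨b, rfl⟩ := (hT σ).1 ⟨h₁, h₂, h₃⟩
      exact ⟨b, hP⟩
    · rintro ⟨b, hP⟩
      obtain ⟨h₁, h₂, h₃⟩ := (hT (T b)).2 ⟨b, rfl⟩
      exact ⟨T b, h₁, h₂, h₃, hP⟩
  by_cases hQ : Q (i + 1) = true
  · rw [xiF, if_pos hQ, qbfTrue, if_pos hQ]
    exact (key _).trans (exists_congr hsat)
  · rw [xiF, if_neg hQ, qbfTrue, if_neg hQ]
    exact (key fun σ => ¬ sat K (xiF Q φ i) σ).not.trans (by simp [hsat])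

end Semantics

theorem BForm.eval_congr {ψ : BForm ℕ} {α α' : ℕ → Bool} (h : ∀ x ∈ ψ.vars, α x = α' x) :
    ψ.eval α = ψ.eval α' := by
  induction ψ with
  | var x => exact h x rfl
  | neg ψ ih => simp [BForm.eval, ih h]
  | and ψ₁ ψ₂ ih₁ ih₂ =>
    simp [BForm.eval, ih₁ fun x hx => h x (Or.inl hx), ih₂ fun x hx => h x (Or.inr hx)]
  | or ψ₁ ψ₂ ih₁ ih₂ =>
    simp [BForm.eval, ih₁ fun x hx => h x (Or.inl hx), ih₂ fun x hx => h x (Or.inr hx)]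

theorem qbfTrue_congr (Q : ℕ → Bool) (φ : BForm ℕ) (i : ℕ) {α α' : ℕ → Bool}
    (h : ∀ x ∈ φ.vars, x ∉ Set.Icc 1 i → α x = α' x) :
    qbfTrue Q φ i α ↔ qbfTrue Q φ i α' := by
  induction i generalizing α α' with
  | zero =>
    simp only [qbfTrue]
    rw [BForm.eval_congr fun x hx => h x hx (by simp)]
  | succ i ih =>
    have hupd : ∀ b, qbfTrue Q φ i (Function.update α (i + 1) b) ↔
        qbfTrue Q φ i (Function.update α' (i + 1) b) := fun b =>
      ih fun x hx hxi => by
        by_cases hx1 : x = i + 1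
        · simp [hx1]
        · simp only [Function.update_of_ne hx1]
          exact h x hx (by simp at hxi ⊢; omega)
    simp only [qbfTrue, hupd]

namespace QState

variable {n : ℕ}

@[simp]
theorem qDelta_w0_iff {x : QState n} : qDelta n .w0 x ↔ x = .w1 := by
  cases x <;> simp [qDelta]

@[simp]
theorem qDelta_sink_iff {x : QState n} : qDelta n .sink x ↔ x = .sink := by
  cases x <;> simp [qDelta]

@[simp]
theorem qDelta_v_false_iff {k : Fin n} {c : Bool} {x : QState n} :
    qDelta n (.v k c false) x ↔ x = .v k c true := by
  cases x <;> simp [qDelta]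

@[simp]
theorem var_mem_qMu_w1 {j : ℕ} : QProp.var j ∈ qMu n .w1 ↔ 1 ≤ j ∧ j ≤ n := by
  simp [qMu]

@[simp]
theorem var_mem_qMu_v {j : ℕ} {k : Fin n} {b s : Bool} :
    QProp.var j ∈ qMu n (.v k b s) ↔ 1 ≤ j ∧ j ≤ n ∧ (b = true ∨ j ≠ k.1 + 1) := by
  cases b <;> simp [qMu]

theorem aux_mem_qMu_iff {m : ℕ} {w : QState n} :
    QProp.aux m ∈ qMu n w ↔ ∃ k b s, w = .v k b s ∧ k.1 + 1 = m := by
  cases w with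
  | v k b s => cases b <;> simp [qMu, eq_comm]
  | _ => simp [qMu]

theorem start_mem_qMu_iff {w : QState n} : QProp.start ∈ qMu n w ↔ w = .w0 ∨ w = .w1 := by
  cases w with
  | v k b s => cases b <;> simp [qMu]
  | _ => simp [qMu]

def rank : QState n → ℕ
  | .w0 => 0
  | .w1 => 1
  | .sink => 2 * n + 2
  | .v k _ s => 2 * (n - k) + s.toNat

theorem rank_of_qDelta {u w : QState n} (h : qDelta n u w) (hw : w ≠ .sink) :
    rank w = rank u + 1 := by
  rcases u with _ | _ | _ | ⟨k, c, _ | _⟩ <;> rcases w with _ | _ | _ | ⟨k', c', _ | _⟩ <;>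
    simp_all [qDelta, rank] <;> omega

theorem eq_sink_of_isChain_sink {τ : List (QState n)}
    (h : List.IsChain (qDelta n) (.sink :: τ)) :
    ∀ x ∈ QState.sink :: τ, x = .sink :=
  h.induction (· = .sink) _ (fun _ _ hxy hx => by simpa [hx] using hxy) (fun _ => rfl)

theorem rank_getLast_of_isChain {u e : QState n} {τ : List (QState n)}
    (h : List.IsChain (qDelta n) (u :: τ)) (he : (u :: τ).getLast? = some e) (hs : e ≠ .sink) :
    rank e = rank u + τ.length := by
  induction τ generalizing u with
  | nil => simp_all
  | cons w τ ih =>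
    rw [List.isChain_cons_cons] at h
    have he' : (w :: τ).getLast? = some e := by simpa using he
    have hw : w ≠ .sink := by
      rintro rfl
      exact hs (eq_sink_of_isChain_sink h.2 e (List.mem_of_getLast? he'))
    rw [ih h.2 he', rank_of_qDelta h.1 hw, List.length_cons]
    ring

/-- `u.IsChoicePoint i`: a track ending in `u` has chosen `x_n, …, x_(i+1)`, and `x_i` is
chosen next; `choicePath u k b` continues it to the first copy of `w_(x_(k+1))^b`. -/
def IsChoicePoint (i : ℕ) : QState n → Prop
  | .w1 => i = n
  | .v k _ false => k.1 = i
  | _ => False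

def choicePath : QState n → Fin n → Bool → List (QState n)
  | .v u c false, k, b => [.v u c true, .v k b false]
  | _, k, b => [.v k b false]

theorem IsChoicePoint.le {i : ℕ} {u : QState n} (hu : u.IsChoicePoint i) : i ≤ n := by
  rcases u with _ | _ | _ | ⟨k, c, _ | _⟩ <;> simp only [IsChoicePoint] at hu
  · exact hu.le
  · exact hu ▸ k.2.le

theorem getLast?_choicePath (u : QState n) (k : Fin n) (b : Bool) :
    (choicePath u k b).getLast? = some (.v k b false) := by
  rcases u with _ | _ | _ | ⟨_, _, _ | _⟩ <;> rfl

theorem choicePath_ne_nil (u : QState n) (k : Fin n) (b : Bool) : choicePath u k b ≠ [] := by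
  intro h
  simpa [h] using getLast?_choicePath u k b

theorem isChain_cons_choicePath {u : QState n} {k : Fin n} (hu : IsChoicePoint (k.1 + 1) u)
    (b : Bool) : List.IsChain (qDelta n) (u :: choicePath u k b) := by
  rcases u with _ | _ | _ | ⟨u, c, _ | _⟩ <;> simp_all [IsChoicePoint, choicePath, qDelta]
  omega

theorem eq_choicePath_of_isChain {u : QState n} {k : Fin n} {b : Bool} {τ : List (QState n)}
    (hu : IsChoicePoint (k.1 + 1) u) (h : List.IsChain (qDelta n) (u :: τ))
    (hlast : τ.getLast? = some (.v k b false)) : τ = choicePath u k b := by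
  -- the rank fixes the length of `τ`, and a first copy has a unique successor
  have hlen := rank_getLast_of_isChain (e := .v k b false) h
    (by simp [List.getLast?_cons, hlast]) (by simp)
  have := k.2
  rcases u with _ | _ | _ | ⟨u, c, _ | _⟩ <;> simp only [IsChoicePoint] at hu
  · obtain ⟨x, rfl⟩ := List.length_eq_one_iff.mp (show τ.length = 1 by simp [rank] at hlen; omega)
    simpa [choicePath] using hlast
  · obtain ⟨x, y, rfl⟩ := List.length_eq_two.mp (show τ.length = 2 by simp [rank] at hlen; omega)
    simp_all [choicePath]

theorem forall_var_mem_choicePath_iff {u : QState n} {k : Fin n}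
    (hu : IsChoicePoint (k.1 + 1) u) (b : Bool) (j : ℕ) :
    (∀ w ∈ choicePath u k b, QProp.var j ∈ qMu n w) ↔
      if j = k.1 + 1 then b = true else QProp.var j ∈ qMu n u := by
  rcases u with _ | _ | _ | ⟨u, c, _ | _⟩ <;> simp only [IsChoicePoint] at hu <;>
    split_ifs <;> simp_all [choicePath]
  omega

end QState

namespace KQBF

open QState

variable {n : ℕ}

theorem sat_modA_aux_iff {m : ℕ} {σ : List (QState n)} :
    sat (KQBF n) (.modA (.prop (.aux m))) σ ↔
      ∃ (k : Fin n) (b : Bool), k.1 + 1 = m ∧ σ.getLast? = some (.v k b false) := by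
  constructor
  · rintro ⟨_ | ⟨a, _ | ⟨a', rest⟩⟩, hA, hhd, hsat⟩
    · simp [isTrack_iff] at hA
    · simp [isTrack_iff] at hA
    obtain ⟨k, b, s, rfl, rfl⟩ := aux_mem_qMu_iff.1 (hsat a (by simp))
    obtain ⟨k', b', s', rfl, hk⟩ := aux_mem_qMu_iff.1 (hsat a' (by simp))
    -- an edge between two states labelled `x_{m aux}` must start in a first copy
    have hs : s = false := by
      cases s
      · rfl
      · simp [isTrack_iff, KQBF, qDelta] at hA
        omega
    subst hs
    exact ⟨k, b, rfl, by simpa using hhd.symm⟩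
  · rintro ⟨k, b, rfl, hlast⟩
    refine ⟨[.v k b false, .v k b true], isTrack_iff.2 ⟨le_rfl, by simp [KQBF]⟩, by simp [hlast],
      fun w hw => ?_⟩
    simp only [List.mem_cons, List.not_mem_nil, or_false] at hw
    rcases hw with rfl | rfl <;> exact aux_mem_qMu_iff.2 ⟨k, b, _, rfl, rfl⟩

theorem isTrack_append_choicePath {ρ : List (QState n)} {u : QState n} {k : Fin n}
    (hρ : IsTrack (KQBF n) ρ) (hlast : ρ.getLast? = some u) (hu : u.IsChoicePoint (k.1 + 1))
    (b : Bool) : IsTrack (KQBF n) (ρ ++ choicePath u k b) :=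
  isTrack_iff.2 ⟨hρ.1.trans (by simp),
    (List.isChain_append_iff_of_getLast? hlast).2 ⟨hρ.2, isChain_cons_choicePath hu b⟩⟩

theorem isTrack_properPrefix_modA_aux_iff {ρ : List (QState n)} {u : QState n} {k : Fin n}
    (hρ : IsTrack (KQBF n) ρ) (hlast : ρ.getLast? = some u) (hu : u.IsChoicePoint (k.1 + 1))
    (σ : List (QState n)) :
    (IsTrack (KQBF n) σ ∧ ProperPrefix ρ σ ∧ sat (KQBF n) (.modA (.prop (.aux (k.1 + 1)))) σ) ↔
      ∃ b, σ = ρ ++ choicePath u k b := by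
  constructor
  · rintro ⟨hσ, hpre, hA⟩
    obtain ⟨τ, hτ, rfl⟩ := hpre.exists_append
    obtain ⟨k', b, hk', hend⟩ := sat_modA_aux_iff.1 hA
    obtain rfl : k' = k := Fin.ext (by omega)
    rw [List.getLast?_append_of_ne_nil _ hτ] at hend
    have hch := ((List.isChain_append_iff_of_getLast? hlast).1 hσ.2).2
    exact ⟨b, by rw [eq_choicePath_of_isChain hu hch hend]⟩
  · rintro ⟨b, rfl⟩
    refine ⟨isTrack_append_choicePath hρ hlast hu b,
      properPrefix_append hρ.1 (choicePath_ne_nil u k b), sat_modA_aux_iff.2 ⟨k, b, rfl, ?_⟩⟩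
    rw [List.getLast?_append_of_ne_nil _ (choicePath_ne_nil u k b), getLast?_choicePath]

theorem trackAssignment_append_choicePath {ρ : List (QState n)} {u : QState n} {k : Fin n}
    (hlast : ρ.getLast? = some u) (hu : u.IsChoicePoint (k.1 + 1))
    (hk : sat (KQBF n) (.prop (.var (k.1 + 1))) ρ) (b : Bool) :
    trackAssignment (KQBF n) (ρ ++ choicePath u k b) =
      Function.update (trackAssignment (KQBF n) ρ) (k.1 + 1) b := by
  funext j
  have hpath := forall_var_mem_choicePath_iff hu b j
  rw [Bool.eq_iff_iff, trackAssignment_eq_true, sat_prop_append]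
  by_cases hj : j = k.1 + 1
  · rw [hj, if_pos rfl] at hpath
    rw [hj, Function.update_self]
    exact (and_iff_right hk).trans hpath
  · rw [if_neg hj] at hpath
    rw [Function.update_of_ne hj, trackAssignment_eq_true]
    exact and_iff_left_of_imp fun h => hpath.2 (h u (List.mem_of_getLast? hlast))

theorem sat_xiF_iff_qbfTrue (Q : ℕ → Bool) (φ : BForm ℕ) (i : ℕ) {ρ : List (QState n)}
    {u : QState n} (hρ : IsTrack (KQBF n) ρ) (hlast : ρ.getLast? = some u)
    (hu : u.IsChoicePoint i) (hvars : ∀ j ∈ Set.Icc 1 i, sat (KQBF n) (.prop (.var j)) ρ) :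
    sat (KQBF n) (xiF Q φ i) ρ ↔ qbfTrue Q φ i (trackAssignment (KQBF n) ρ) := by
  induction i generalizing ρ u with
  | zero => exact sat_toHSQ_iff _ φ ρ
  | succ i ih =>
    let k : Fin n := ⟨i, hu.le⟩
    refine sat_xiF_succ_iff _ (fun b => ρ ++ choicePath u k b)
      (isTrack_properPrefix_modA_aux_iff (k := k) hρ hlast hu) fun b => ?_
    rw [← trackAssignment_append_choicePath (k := k) hlast hu (hvars (i + 1) ⟨by omega, le_rfl⟩)]
    refine ih (u := .v k b false) (isTrack_append_choicePath hρ hlast hu b) ?_ rfl fun j hj => ?_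
    · rw [List.getLast?_append_of_ne_nil _ (choicePath_ne_nil u k b), getLast?_choicePath]
    · have hj' : j ≠ k.1 + 1 := by have := hj.2; simp only [k]; omega
      have hρj := hvars j ⟨hj.1, hj.2.trans i.le_succ⟩
      refine (sat_prop_append _).2 ⟨hρj, (forall_var_mem_choicePath_iff hu b j).2 ?_⟩
      rw [if_neg hj']
      exact hρj u (List.mem_of_getLast? hlast)

theorem isTrack_w0_w1 : IsTrack (KQBF n) [.w0, .w1] := isTrack_iff.2 ⟨le_rfl, by simp [KQBF]⟩

theorem sat_start_w0_w1 : sat (KQBF n) (.prop .start) [.w0, .w1] := by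
  simp [sat, KQBF, start_mem_qMu_iff]

theorem eq_w0_w1_of_sat_start {ρ : List (QState n)} (hρ : IsTrack (KQBF n) ρ)
    (hhd : ρ.head? = some .w0) (hstart : sat (KQBF n) (.prop .start) ρ) : ρ = [.w0, .w1] := by
  obtain ⟨hlen, hch⟩ := isTrack_iff.1 hρ
  rcases ρ with _ | ⟨a, _ | ⟨x, _ | ⟨y, rest⟩⟩⟩
  · simp at hlen
  · simp at hlen
  · simp_all [KQBF]
  · simp only [List.head?_cons, Option.some.injEq] at hhd
    subst hhd
    simp only [KQBF, List.isChain_cons_cons, qDelta_w0_iff] at hch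
    obtain ⟨rfl, hy, -⟩ := hch
    rcases start_mem_qMu_iff.1 (hstart y (by simp)) with rfl | rfl <;> simp [qDelta] at hy

end KQBF

/-- the QBF `ψ = Q_n x_n ⋯ Q_1 x_1 φ` is true iff every initial track
of `K_QBF^Var` satisfies `ξ = start → ξ_n`. -/
theorem qbf_model_checking (n : ℕ) (Q : ℕ → Bool) (φ : BForm ℕ)
    (hvars : ∀ x ∈ φ.vars, 1 ≤ x ∧ x ≤ n) :
    (∀ α : ℕ → Bool, qbfTrue Q φ n α) ↔
      (∀ ρ : List (QState n), IsTrack (KQBF n) ρ → ρ.head? = some .w0 →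
        sat (KQBF n) (.neg (.and (.prop .start) (.neg (xiF Q φ n)))) ρ) := by
  have hinit : sat (KQBF n) (xiF Q φ n) [.w0, .w1] ↔
      qbfTrue Q φ n (trackAssignment (KQBF n) [.w0, .w1]) :=
    KQBF.sat_xiF_iff_qbfTrue Q φ n KQBF.isTrack_w0_w1 rfl rfl fun j hj => by
      simp [sat, KQBF, qMu, hj.1, hj.2]
  have hα : ∀ α, qbfTrue Q φ n α ↔ qbfTrue Q φ n (trackAssignment (KQBF n) [.w0, .w1]) :=
    fun α => qbfTrue_congr Q φ n fun x hx hx' => absurd (hvars x hx) hx'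
  constructor
  · rintro hqbf ρ hρ hhd ⟨hstart, hξ⟩
    obtain rfl := KQBF.eq_w0_w1_of_sat_start hρ hhd hstart
    exact hξ (hinit.2 (hqbf _))
  · intro h α
    refine (hα α).2 (hinit.1 (not_not.1 fun hξ => ?_))
    exact h _ KQBF.isTrack_w0_w1 rfl ⟨KQBF.sat_start_w0_w1, hξ⟩
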